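/- Let H = (V,U;A) be a semicomplete bipartite digraph that contains no induced subdigraph belonging to the family HFORB but contains the directed 4-cycle as an induced subdigraph, and let C = v_1 u_1 v_2 u_2 v_1 be an induced directed 4-cycle of H with v_1, v_2 ∈ V and u_1, u_2 ∈ U. For i = 1, 2 set M(v_i) = {u ∈ U : u v_i ∈ A and v_i u ∈ A}, M^+(v_i) = {u ∈ U : v_i u ∈ A, u v_i ∉ A} and M^-(v_i) = {u ∈ U : u v_i ∈ A, v_i u ∉ A}. Then M(v_1) = M(v_2) = ∅, M^+(v_1) = M^-(v_2) and M^-(v_1) = M^+(v_2). -/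

import Mathlib

/-!
Let `C = v₁ u₁ v₂ u₂ v₁`. If some `u ∈ U` formed a 2-cycle with `v₁`, then, according to the
arcs between `u` and `v₂`, the vertices `v₁, v₂, u` together with `u₁` or `u₂` would induce
`C4''`, `C4'` or the converse of `C4'`. If `v₁ → u` but not `u → v₁`, then `u → v₂`, for otherwise
`v₂ → u` and `C + u` induces `H*`. The remaining inclusions follow from the symmetries of the
situation: rotating `C` by two steps, and passing to the converse digraph, which swaps `H*` with
its converse.
-/

namespace SBD

/-- `F` has an induced copy in the digraph with arc relation `A`. -/
def InducedCopy {β W : Type*} (F : β → β → Prop) (A : W → W → Prop) : Prop :=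
  ∃ f : β → W, Function.Injective f ∧ ∀ a b, F a b ↔ A (f a) (f b)

/-- The undirected graph `E` is isomorphic to the underlying graph of the subdigraph of
`R` induced by the image of some injection. -/
def GraphCopy {β W : Type*} (E : β → β → Prop) (R : W → W → Prop) : Prop :=
  ∃ f : β → W, Function.Injective f ∧ ∀ a b, E a b ↔ (R (f a) (f b) ∨ R (f b) (f a))

/-- C4' : vertices x1=0, x2=1, y1=2, y2=3, arcs {x1y1, y1x2, x2y2, y2x1, y1x1}. -/
def C4P : Fin 4 → Fin 4 → Prop := fun a b =>
  (a, b) ∈ ([(0,2),(2,1),(1,3),(3,0),(2,0)] : List (Fin 4 × Fin 4))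

/-- C4'' : C4' plus the arc x2y1. -/
def C4PP : Fin 4 → Fin 4 → Prop := fun a b =>
  (a, b) ∈ ([(0,2),(2,1),(1,3),(3,0),(2,0),(1,2)] : List (Fin 4 × Fin 4))

/-- H* : vertices x1=0, x2=1, y1=2, y2=3, y3=4, arcs {x1y1,y1x2,x2y2,y2x1,x1y3,x2y3}. -/
def Hstar : Fin 5 → Fin 5 → Prop := fun a b =>
  (a, b) ∈ ([(0,2),(2,1),(1,3),(3,0),(0,4),(1,4)] : List (Fin 5 × Fin 5))

/-- N1 : vertices x1=0,x2=1,x3=2,y1=3,y2=4,y3=5. -/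
def N1 : Fin 6 → Fin 6 → Prop := fun a b =>
  (a, b) ∈ ([(0,3),(3,0),(1,4),(4,1),(2,5),(5,2),(3,1),(3,2),(0,4),(0,5),(2,4),(1,5)] :
    List (Fin 6 × Fin 6))

/-- N2 : N1 with the arc y1x1 removed. -/
def N2 : Fin 6 → Fin 6 → Prop := fun a b =>
  (a, b) ∈ ([(0,3),(1,4),(4,1),(2,5),(5,2),(3,1),(3,2),(0,4),(0,5),(2,4),(1,5)] :
    List (Fin 6 × Fin 6))

/-- symmetric (undirected) edge relation generated by a list of pairs -/
def symE {n : ℕ} (l : List (Fin n × Fin n)) : Fin n → Fin n → Prop :=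
  fun a b => (a, b) ∈ l ∨ (b, a) ∈ l

/-- bipartite claw: x1=0,x2=1,x3=2,x4=3,y1=4,y2=5,y3=6. -/
def clawE : Fin 7 → Fin 7 → Prop := symE [(3,4),(4,0),(3,5),(5,1),(3,6),(6,2)]

/-- bipartite net -/
def netE : Fin 7 → Fin 7 → Prop := symE [(0,4),(4,2),(4,3),(2,5),(3,5),(5,1),(6,3)]

/-- bipartite tent -/
def tentE : Fin 7 → Fin 7 → Prop := symE [(4,0),(4,1),(4,2),(4,3),(0,5),(0,6),(3,5),(1,6)]

/-- undirected cycle on `n` vertices -/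
def cycE (n : ℕ) : ZMod n → ZMod n → Prop := fun a b => b = a + 1 ∨ a = b + 1

/-- directed cycle on `n` vertices -/
def dirCyc (n : ℕ) : ZMod n → ZMod n → Prop := fun a b => b = a + 1

/-- arcs of H^→ : from the V-side (σ = false) to the U-side (σ = true) -/
def fwdArc {W : Type*} (σ : W → Bool) (A : W → W → Prop) : W → W → Prop :=
  fun x y => A x y ∧ σ x = false ∧ σ y = true

/-- arcs of H^← : from the U-side (σ = true) to the V-side (σ = false) -/
def bwdArc {W : Type*} (σ : W → Bool) (A : W → W → Prop) : W → W → Prop :=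
  fun x y => A x y ∧ σ x = true ∧ σ y = false

/-- arcs of H^↔ : arcs lying on 2-cycles -/
def symArc {W : Type*} (A : W → W → Prop) : W → W → Prop :=
  fun x y => A x y ∧ A y x

/-- underlying undirected graph of H^→ -/
def unFwd {W : Type*} (σ : W → Bool) (A : W → W → Prop) : W → W → Prop :=
  fun x y => fwdArc σ A x y ∨ fwdArc σ A y x

/-- The bipartite digraph `(σ, A)` contains an induced subdigraph from the family HFORB. -/
def ContainsHFORB {W : Type*} (σ : W → Bool) (A : W → W → Prop) : Prop :=
  InducedCopy C4P A ∨ InducedCopy (flip C4P) A ∨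
  InducedCopy C4PP A ∨ InducedCopy (flip C4PP) A ∨
  InducedCopy Hstar A ∨ InducedCopy (flip Hstar) A ∨
  InducedCopy N1 A ∨ InducedCopy (flip N1) A ∨
  InducedCopy N2 A ∨ InducedCopy (flip N2) A ∨
  (∃ R ∈ [fwdArc σ A, bwdArc σ A, symArc A],
    GraphCopy clawE R ∨ GraphCopy netE R ∨ GraphCopy tentE R ∨
    ∃ k : ℕ, 3 ≤ k ∧ GraphCopy (cycE (2 * k)) R)

/-- `(σ, A)` is a semicomplete bipartite digraph with partite sets `σ = false` (the set V)
and `σ = true` (the set U). -/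
def SemicompleteBipartite {W : Type*} (σ : W → Bool) (A : W → W → Prop) : Prop :=
  (∀ x y, A x y → σ x ≠ σ y) ∧ (∀ x y, σ x ≠ σ y → A x y ∨ A y x)

/-- the concatenated ordering of the classes `V_j` and `V_{j+1}`. -/
def concatOrd {W : Type*} {k : ℕ} {part : W → ZMod k} {len : ZMod k → ℕ}
    (ord : (j : ZMod k) → Fin (len j) ≃ {x : W // part x = j}) (j : ZMod k) :
    Fin (len j + len (j + 1)) → W :=
  Fin.addCases (fun i => ((ord j) i).1) (fun i => ((ord (j + 1)) i).1)

/-- `A` has a `k`-Min-Max ordering. -/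
def HasKMinMaxOrdering {W : Type*} (A : W → W → Prop) (k : ℕ) : Prop :=
  ∃ (part : W → ZMod k) (len : ZMod k → ℕ)
    (ord : (j : ZMod k) → Fin (len j) ≃ {x : W // part x = j}),
    (∀ x y, A x y → part y = part x + 1) ∧
    ∀ (j : ZMod k) (i₁ i₂ i₃ i₄ : Fin (len j + len (j + 1))),
      A (concatOrd ord j i₁) (concatOrd ord j i₂) →
      A (concatOrd ord j i₃) (concatOrd ord j i₄) →
      A (concatOrd ord j (min i₁ i₃)) (concatOrd ord j (min i₂ i₄)) ∧
      A (concatOrd ord j (max i₁ i₃)) (concatOrd ord j (max i₂ i₄))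

section

variable {W : Type*} {σ : W → Bool} {A : W → W → Prop}

theorem SemicompleteBipartite.not_adj_of_side_eq (hsb : SemicompleteBipartite σ A) {x y : W}
    (h : σ x = σ y) : ¬ A x y :=
  fun hxy => hsb.1 x y hxy h

theorem SemicompleteBipartite.adj_of_not_adj (hsb : SemicompleteBipartite σ A) {x y : W}
    (h : σ x ≠ σ y) (hxy : ¬ A x y) : A y x :=
  (hsb.2 x y h).resolve_left hxy

theorem SemicompleteBipartite.flip (hsb : SemicompleteBipartite σ A) :
    SemicompleteBipartite σ (flip A) :=
  ⟨fun x y h => (hsb.1 y x h).symm, fun x y h => (hsb.2 x y h).symm⟩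

theorem inducedCopy_flip_iff {β : Type*} {F : β → β → Prop} :
    InducedCopy (flip F) (flip A) ↔ InducedCopy F A :=
  ⟨fun ⟨f, hf, h⟩ => ⟨f, hf, fun a b => h b a⟩, fun ⟨f, hf, h⟩ => ⟨f, hf, fun a b => h b a⟩⟩

def TwinFree {β : Type*} (F : β → β → Prop) : Prop :=
  ∀ a b, (∀ c, F a c ↔ F b c) → (∀ c, F c a ↔ F c b) → a = b

theorem TwinFree.inducedCopy {β : Type*} {F : β → β → Prop} (hF : TwinFree F) (f : β → W)
    (hf : ∀ a b, F a b ↔ A (f a) (f b)) : InducedCopy F A := by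
  refine ⟨f, fun a b hab => hF a b (fun c => ?_) (fun c => ?_), hf⟩
  · rw [hf, hf, hab]
  · rw [hf, hf, hab]

theorem TwinFree.flip {β : Type*} {F : β → β → Prop} (hF : TwinFree F) : TwinFree (flip F) :=
  fun a b hout hin => hF a b hin hout

section

-- `decide` needs a `Decidable` instance larger than the default size limit.
set_option synthInstance.maxSize 1000

theorem twinFree_C4P : TwinFree C4P := by unfold TwinFree C4P; decide

theorem twinFree_C4PP : TwinFree C4PP := by unfold TwinFree C4PP; decide

theorem twinFree_Hstar : TwinFree Hstar := by unfold TwinFree Hstar; decide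

end

structure IsInducedDirC4 (σ : W → Bool) (A : W → W → Prop) (v₁ u₁ v₂ u₂ : W) : Prop where
  side_v₁ : σ v₁ = false
  side_v₂ : σ v₂ = false
  side_u₁ : σ u₁ = true
  side_u₂ : σ u₂ = true
  adj_v₁_u₁ : A v₁ u₁
  adj_u₁_v₂ : A u₁ v₂
  adj_v₂_u₂ : A v₂ u₂
  adj_u₂_v₁ : A u₂ v₁
  not_adj_u₁_v₁ : ¬ A u₁ v₁
  not_adj_v₂_u₁ : ¬ A v₂ u₁
  not_adj_u₂_v₂ : ¬ A u₂ v₂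
  not_adj_v₁_u₂ : ¬ A v₁ u₂

namespace IsInducedDirC4

variable {v₁ u₁ v₂ u₂ : W}

theorem rotate (C : IsInducedDirC4 σ A v₁ u₁ v₂ u₂) : IsInducedDirC4 σ A v₂ u₂ v₁ u₁ :=
  ⟨C.2, C.1, C.4, C.3, C.7, C.8, C.5, C.6, C.11, C.12, C.9, C.10⟩

theorem converse (C : IsInducedDirC4 σ A v₁ u₁ v₂ u₂) : IsInducedDirC4 σ (flip A) v₁ u₂ v₂ u₁ :=
  ⟨C.1, C.2, C.4, C.3, C.8, C.7, C.6, C.5, C.12, C.11, C.10, C.9⟩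

theorem not_adj_of_adj (C : IsInducedDirC4 σ A v₁ u₁ v₂ u₂) (hsb : SemicompleteBipartite σ A)
    (hC4P : ¬ InducedCopy C4P A) (hC4P' : ¬ InducedCopy (flip C4P) A)
    (hC4PP : ¬ InducedCopy C4PP A) {u : W} (hu : σ u = true) (huv₁ : A u v₁) :
    ¬ A v₁ u := by
  intro hv₁u
  obtain ⟨hv₁, hv₂, hu₁, hu₂, h₁, h₂, h₃, h₄, hn₁, hn₂, hn₃, hn₄⟩ := C
  by_cases huv₂ : A u v₂ <;> by_cases hv₂u : A v₂ u
  · refine hC4PP (twinFree_C4PP.inducedCopy ![v₂, v₁, u, u₁] fun a b => ?_)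
    fin_cases a <;> fin_cases b <;> simp [C4PP, hsb.not_adj_of_side_eq, *]
  · refine hC4P (twinFree_C4P.inducedCopy ![v₁, v₂, u, u₂] fun a b => ?_)
    fin_cases a <;> fin_cases b <;> simp [C4P, hsb.not_adj_of_side_eq, *]
  · refine hC4P' (twinFree_C4P.flip.inducedCopy ![v₁, v₂, u, u₁] fun a b => ?_)
    fin_cases a <;> fin_cases b <;> simp [C4P, flip, hsb.not_adj_of_side_eq, *]
  · exact hv₂u (hsb.adj_of_not_adj (by simp [hu, hv₂]) huv₂)

theorem adj_of_adj_of_not_adj (C : IsInducedDirC4 σ A v₁ u₁ v₂ u₂)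
    (hsb : SemicompleteBipartite σ A) (hHstar : ¬ InducedCopy Hstar A) {u : W}
    (hu : σ u = true) (hv₁u : A v₁ u) (huv₁ : ¬ A u v₁) : A u v₂ := by
  by_contra huv₂
  obtain ⟨hv₁, hv₂, hu₁, hu₂, h₁, h₂, h₃, h₄, hn₁, hn₂, hn₃, hn₄⟩ := C
  have hv₂u : A v₂ u := hsb.adj_of_not_adj (by simp [hu, hv₂]) huv₂
  refine hHstar (twinFree_Hstar.inducedCopy ![v₁, v₂, u₁, u₂, u] fun a b => ?_)
  fin_cases a <;> fin_cases b <;> simp [Hstar, hsb.not_adj_of_side_eq, *]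

theorem mutual_eq_empty (C : IsInducedDirC4 σ A v₁ u₁ v₂ u₂) (hsb : SemicompleteBipartite σ A)
    (hforb : ¬ ContainsHFORB σ A) : {u : W | σ u = true ∧ A u v₁ ∧ A v₁ u} = ∅ :=
  Set.eq_empty_of_forall_notMem fun _ ⟨hu, huv₁, hv₁u⟩ =>
    C.not_adj_of_adj hsb (fun h => hforb (by simp [ContainsHFORB, h]))
      (fun h => hforb (by simp [ContainsHFORB, h])) (fun h => hforb (by simp [ContainsHFORB, h]))
      hu huv₁ hv₁u

theorem outOnly_eq_inOnly (C : IsInducedDirC4 σ A v₁ u₁ v₂ u₂) (hsb : SemicompleteBipartite σ A)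
    (hforb : ¬ ContainsHFORB σ A) :
    {u : W | σ u = true ∧ A v₁ u ∧ ¬ A u v₁} = {u : W | σ u = true ∧ A u v₂ ∧ ¬ A v₂ u} := by
  have hHstar : ¬ InducedCopy Hstar A := fun h => hforb (by simp [ContainsHFORB, h])
  have hHstar' : ¬ InducedCopy Hstar (flip A) := fun h =>
    hforb (by simp [ContainsHFORB, inducedCopy_flip_iff (F := flip Hstar) |>.1 h])
  ext u
  constructor
  · rintro ⟨hu, hv₁u, huv₁⟩
    have huv₂ := C.adj_of_adj_of_not_adj hsb hHstar hu hv₁u huv₁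
    exact ⟨hu, huv₂, fun hv₂u => (C.rotate.mutual_eq_empty hsb hforb).subset ⟨hu, huv₂, hv₂u⟩⟩
  · rintro ⟨hu, huv₂, hv₂u⟩
    have hv₁u : A v₁ u := C.rotate.converse.adj_of_adj_of_not_adj hsb.flip hHstar' hu huv₂ hv₂u
    exact ⟨hu, hv₁u, fun huv₁ => (C.mutual_eq_empty hsb hforb).subset ⟨hu, huv₁, hv₁u⟩⟩

end IsInducedDirC4

end

theorem stmt18_general {W : Type*} (σ : W → Bool) (A : W → W → Prop)
    (hsb : SemicompleteBipartite σ A)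
    (hforb : ¬ ContainsHFORB σ A)
    (v₁ v₂ u₁ u₂ : W)
    (hv₁ : σ v₁ = false) (hv₂ : σ v₂ = false) (hu₁ : σ u₁ = true) (hu₂ : σ u₂ = true)
    (ha₁ : A v₁ u₁) (ha₂ : A u₁ v₂) (ha₃ : A v₂ u₂) (ha₄ : A u₂ v₁)
    (hn₁ : ¬ A u₁ v₁) (hn₂ : ¬ A v₂ u₁) (hn₃ : ¬ A u₂ v₂) (hn₄ : ¬ A v₁ u₂) :
    ({u : W | σ u = true ∧ A u v₁ ∧ A v₁ u} = ∅ ∧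
     {u : W | σ u = true ∧ A u v₂ ∧ A v₂ u} = ∅) ∧
    {u : W | σ u = true ∧ A v₁ u ∧ ¬ A u v₁} = {u : W | σ u = true ∧ A u v₂ ∧ ¬ A v₂ u} ∧
    {u : W | σ u = true ∧ A u v₁ ∧ ¬ A v₁ u} = {u : W | σ u = true ∧ A v₂ u ∧ ¬ A u v₂} := by
  have C : IsInducedDirC4 σ A v₁ u₁ v₂ u₂ :=
    ⟨hv₁, hv₂, hu₁, hu₂, ha₁, ha₂, ha₃, ha₄, hn₁, hn₂, hn₃, hn₄⟩
  exact ⟨⟨C.mutual_eq_empty hsb hforb, C.rotate.mutual_eq_empty hsb hforb⟩,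
    C.outOnly_eq_inOnly hsb hforb, (C.rotate.outOnly_eq_inOnly hsb hforb).symm⟩

/-- From the proof of Theorem 3.4: if `v₁ u₁ v₂ u₂ v₁` is an induced directed 4-cycle of a
semicomplete bipartite digraph containing no induced subdigraph from HFORB, then
`M(v₁) = M(v₂) = ∅`, `M⁺(v₁) = M⁻(v₂)` and `M⁻(v₁) = M⁺(v₂)`. -/
theorem stmt18 {W : Type*} [Fintype W] (σ : W → Bool) (A : W → W → Prop)
    (hsb : SemicompleteBipartite σ A)
    (hforb : ¬ ContainsHFORB σ A)
    (v₁ v₂ u₁ u₂ : W)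
    (hv₁ : σ v₁ = false) (hv₂ : σ v₂ = false) (hu₁ : σ u₁ = true) (hu₂ : σ u₂ = true)
    (hvv : v₁ ≠ v₂) (huu : u₁ ≠ u₂)
    (ha₁ : A v₁ u₁) (ha₂ : A u₁ v₂) (ha₃ : A v₂ u₂) (ha₄ : A u₂ v₁)
    (hn₁ : ¬ A u₁ v₁) (hn₂ : ¬ A v₂ u₁) (hn₃ : ¬ A u₂ v₂) (hn₄ : ¬ A v₁ u₂) :
    ({u : W | σ u = true ∧ A u v₁ ∧ A v₁ u} = ∅ ∧
     {u : W | σ u = true ∧ A u v₂ ∧ A v₂ u} = ∅) ∧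
    {u : W | σ u = true ∧ A v₁ u ∧ ¬ A u v₁} = {u : W | σ u = true ∧ A u v₂ ∧ ¬ A v₂ u} ∧
    {u : W | σ u = true ∧ A u v₁ ∧ ¬ A v₁ u} = {u : W | σ u = true ∧ A v₂ u ∧ ¬ A u v₂} :=
  stmt18_general σ A hsb hforb v₁ v₂ u₁ u₂ hv₁ hv₂ hu₁ hu₂ ha₁ ha₂ ha₃ ha₄ hn₁ hn₂ hn₃ hn₄

end SBD
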